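/- The (p,q)-Rogers-Szegő polynomials H_n(x;p,q) = Σ_{k=0}^n [n choose k]_{p,q} x^k satisfy the recurrence H_{n+1}(x;p,q) = H_n(px;p,q) + x p^n H_n(p^{-1}x;p,q) - (p^n - q^n) x H_{n-1}(x;p,q) for n ≥ 1. -/

import Mathlib

/-- The (p,q)-number `[n]_{p,q} = (p^n - q^n)/(p-q)`. -/
noncomputable def pqNum (p q : ℝ) (n : ℕ) : ℝ := (p ^ n - q ^ n) / (p - q)

/-- The (p,q)-factorial `[n]_{p,q}!`. -/
noncomputable def pqFac (p q : ℝ) (n : ℕ) : ℝ := ∏ j ∈ Finset.range n, pqNum p q (j + 1)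

/-- The (p,q)-binomial coefficient. -/
noncomputable def pqBinom (p q : ℝ) (n k : ℕ) : ℝ :=
  pqFac p q n / (pqFac p q k * pqFac p q (n - k))

/-- The (p,q)-Rogers-Szegő polynomial `H_n(x;p,q)`. -/
noncomputable def pqRogersSzego (p q : ℝ) (n : ℕ) (x : ℝ) : ℝ :=
  ∑ k ∈ Finset.range (n + 1), pqBinom p q n k * x ^ k

/-!
Expand `H_{n+1}` with the (p,q)-Pascal rule `[n+1, k+1] = p^(k+1) [n, k+1] + q^(n-k) [n, k]`.
The `p^(k+1)` part is `H_n(px)`. Writing `q^(n-k) = p^(n-k) - (p^(n-k) - q^(n-k))`, the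
`p^(n-k)` part is `x p^n H_n(x/p)`, and the absorption identity
`(p^(n-k) - q^(n-k)) [n, k] = (p^n - q^n) [n-1, k]` turns the rest into `(p^n - q^n) x H_{n-1}(x)`.
-/

open Finset

lemma pqNum_add (p q : ℝ) (a b : ℕ) :
    pqNum p q (a + b) = p ^ a * pqNum p q b + q ^ b * pqNum p q a := by
  simp only [pqNum, mul_div_assoc', ← add_div]
  ring

-- Also true for `p = q`, where both sides are `0` because `pqNum p p m = 0 / 0 = 0`.
lemma sub_mul_pqNum (p q : ℝ) (m : ℕ) : (p - q) * pqNum p q m = p ^ m - q ^ m := by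
  rcases eq_or_ne p q with rfl | hpq
  · simp
  · exact mul_div_cancel₀ _ (sub_ne_zero.2 hpq)

@[simp]
lemma pqFac_zero (p q : ℝ) : pqFac p q 0 = 1 := prod_range_zero _

lemma pqFac_succ (p q : ℝ) (n : ℕ) : pqFac p q (n + 1) = pqFac p q n * pqNum p q (n + 1) :=
  prod_range_succ _ _

section

variable {p q : ℝ}

lemma pqFac_succ_ne_zero_iff {n : ℕ} :
    pqFac p q (n + 1) ≠ 0 ↔ pqFac p q n ≠ 0 ∧ pqNum p q (n + 1) ≠ 0 := by
  rw [pqFac_succ, mul_ne_zero_iff]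

lemma pqFac_ne_zero_of_le {m n : ℕ} (hF : pqFac p q n ≠ 0) (hmn : m ≤ n) :
    pqFac p q m ≠ 0 :=
  prod_ne_zero_iff.2 fun j hj => prod_ne_zero_iff.1 hF j (range_mono hmn hj)

lemma pqFac_ne_zero {n : ℕ} (h : ∀ j, 1 ≤ j → j ≤ n → p ^ j ≠ q ^ j) :
    pqFac p q n ≠ 0 := by
  refine prod_ne_zero_iff.2 fun j hj => ?_
  have hjn : j + 1 ≤ n := mem_range.1 hj
  have hpq : p ≠ q := by simpa using h 1 le_rfl (by omega)
  exact div_ne_zero (sub_ne_zero.2 (h (j + 1) (by omega) hjn)) (sub_ne_zero.2 hpq)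

lemma pqBinom_zero_right {n : ℕ} (hF : pqFac p q n ≠ 0) : pqBinom p q n 0 = 1 := by
  simp [pqBinom, hF]

lemma pqBinom_self {n : ℕ} (hF : pqFac p q n ≠ 0) : pqBinom p q n n = 1 := by
  simp [pqBinom, hF]

-- With `n = k + j + 1` this is `[k + j + 2] = p^(k+1) [j+1] + q^(j+1) [k+1]`, i.e. `pqNum_add`.
lemma pqBinom_succ_succ {n k : ℕ} (hF : pqFac p q n ≠ 0) (hk : k < n) :
    pqBinom p q (n + 1) (k + 1) =
      p ^ (k + 1) * pqBinom p q n (k + 1) + q ^ (n - k) * pqBinom p q n k := by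
  obtain ⟨j, rfl⟩ : ∃ j, n = k + j + 1 := ⟨n - k - 1, by omega⟩
  obtain ⟨hFk, hk1⟩ := pqFac_succ_ne_zero_iff.1 <|
    pqFac_ne_zero_of_le hF (by omega : k + 1 ≤ _)
  obtain ⟨hFj, hj1⟩ := pqFac_succ_ne_zero_iff.1 <|
    pqFac_ne_zero_of_le hF (by omega : j + 1 ≤ _)
  simp only [pqBinom, show k + j + 1 + 1 - (k + 1) = j + 1 by omega,
    show k + j + 1 - (k + 1) = j by omega, show k + j + 1 - k = j + 1 by omega,
    pqFac_succ p q (k + j + 1), pqFac_succ p q k, pqFac_succ p q j]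
  rw [show k + j + 1 + 1 = k + 1 + (j + 1) by omega, pqNum_add]
  field_simp

-- The (p,q)-analogue of `Nat.choose_mul_succ_eq`.
lemma pqBinom_mul_pqNum_succ_eq {n k : ℕ} (hF : pqFac p q (n + 1) ≠ 0) (hk : k ≤ n) :
    pqBinom p q n k * pqNum p q (n + 1) = pqBinom p q (n + 1) k * pqNum p q (n + 1 - k) := by
  obtain ⟨j, rfl⟩ : ∃ j, n = k + j := ⟨n - k, by omega⟩
  have hFk := pqFac_ne_zero_of_le hF (by omega : k ≤ _)
  obtain ⟨hFj, hj1⟩ := pqFac_succ_ne_zero_iff.1 <|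
    pqFac_ne_zero_of_le hF (by omega : j + 1 ≤ _)
  simp only [pqBinom, show k + j + 1 - k = j + 1 by omega, show k + j - k = j by omega,
    pqFac_succ p q (k + j), pqFac_succ p q j]
  field_simp

lemma pqRogersSzego_succ {n : ℕ} (hF : pqFac p q (n + 1) ≠ 0) (x : ℝ) :
    pqRogersSzego p q (n + 1) x = pqRogersSzego p q n (p * x) +
      x * ∑ k ∈ range (n + 1), q ^ (n - k) * pqBinom p q n k * x ^ k := by
  have hFn := (pqFac_succ_ne_zero_iff.1 hF).1
  have hpascal : ∀ k ∈ range n, pqBinom p q (n + 1) (k + 1) * x ^ (k + 1) =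
      pqBinom p q n (k + 1) * (p * x) ^ (k + 1) + x * (q ^ (n - k) * pqBinom p q n k * x ^ k) := by
    intro k hk
    rw [pqBinom_succ_succ hFn (mem_range.1 hk)]
    ring
  rw [pqRogersSzego, pqRogersSzego, sum_range_succ', sum_range_succ, sum_congr rfl hpascal,
    sum_add_distrib, sum_range_succ' _ n, sum_range_succ _ n, mul_add, ← mul_sum,
    pqBinom_self hF, pqBinom_self hFn, pqBinom_zero_right hF, pqBinom_zero_right hFn,
    Nat.sub_self]
  ring

lemma pow_mul_pqRogersSzego_inv_mul (hp : p ≠ 0) (n : ℕ) (x : ℝ) :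
    p ^ n * pqRogersSzego p q n (p⁻¹ * x) =
      ∑ k ∈ range (n + 1), p ^ (n - k) * pqBinom p q n k * x ^ k := by
  rw [pqRogersSzego, mul_sum]
  refine sum_congr rfl fun k hk => ?_
  rw [mul_pow, inv_pow, pow_sub₀ p hp (by simpa [Nat.lt_succ_iff] using hk)]
  ring

lemma sum_pow_sub_pow_mul_pqBinom {n : ℕ} (hF : pqFac p q n ≠ 0) (x : ℝ) :
    ∑ k ∈ range (n + 1), (p ^ (n - k) - q ^ (n - k)) * pqBinom p q n k * x ^ k =
      (p ^ n - q ^ n) * pqRogersSzego p q (n - 1) x := by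
  cases n with
  | zero => simp
  | succ m =>
    rw [sum_range_succ, Nat.sub_self, pow_zero, pow_zero, sub_self, zero_mul, zero_mul, add_zero,
      Nat.add_sub_cancel, pqRogersSzego, mul_sum]
    refine sum_congr rfl fun k hk => ?_
    rw [← sub_mul_pqNum, ← sub_mul_pqNum, mul_assoc (p - q), mul_comm (pqNum p q _),
      ← pqBinom_mul_pqNum_succ_eq hF (by simpa [Nat.lt_succ_iff] using hk)]
    ring

end

theorem pqRogersSzego_recurrence_general (p q : ℝ) (hp : p ≠ 0) (n : ℕ)
    (h : ∀ j, 1 ≤ j → j ≤ n + 1 → p ^ j ≠ q ^ j) (x : ℝ) :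
    pqRogersSzego p q (n + 1) x =
      pqRogersSzego p q n (p * x) + x * p ^ n * pqRogersSzego p q n (p⁻¹ * x)
        - (p ^ n - q ^ n) * x * pqRogersSzego p q (n - 1) x := by
  have hF : pqFac p q (n + 1) ≠ 0 := pqFac_ne_zero h
  rw [pqRogersSzego_succ hF, mul_assoc x, pow_mul_pqRogersSzego_inv_mul hp,
    mul_comm (p ^ n - q ^ n) x, mul_assoc x,
    ← sum_pow_sub_pow_mul_pqBinom (pqFac_succ_ne_zero_iff.1 hF).1]
  simp only [sub_mul, sum_sub_distrib]
  ring

/-- The recurrence `H_{n+1}(x;p,q) = H_n(px;p,q) + x p^n H_n(p⁻¹x;p,q)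
 - (p^n - q^n) x H_{n-1}(x;p,q)` for `n ≥ 1`. -/
theorem pqRogersSzego_recurrence (p q : ℝ) (hp : p ≠ 0) (n : ℕ)
    (h : ∀ j, 1 ≤ j → j ≤ n + 1 → p ^ j ≠ q ^ j) (hn : 1 ≤ n) (x : ℝ) :
    pqRogersSzego p q (n + 1) x =
      pqRogersSzego p q n (p * x) + x * p ^ n * pqRogersSzego p q n (p⁻¹ * x)
        - (p ^ n - q ^ n) * x * pqRogersSzego p q (n - 1) x :=
  pqRogersSzego_recurrence_general p q hp n h x
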